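/- Let {τ_n}_{n≥1} be piecewise expanding maps of [0,1] (each piecewise strictly monotone and C² on the intervals of a finite partition, with |τ_n'| ≥ s > 1 on each piece), converging uniformly to a map τ, and assume all τ_n satisfy the Lasota–Yorke inequality V(P_{τ_n} f) ≤ A·V(f) + B·∫|f| dm with common constants 0 ≤ A < 1 and B. Then the limit map τ admits an absolutely continuous invariant probability measure whose density is of bounded variation with V(f*) ≤ B/(1−A). -/

import Mathlib

open MeasureTheory Filter Topology
open scoped ENNReal

/-- Lebesgue measure on `[0,1]`. -/
noncomputable def m : Measure ℝ := volume.restrict (Set.Icc 0 1)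

/-- `T : [0,1] → [0,1]` is piecewise expanding: there is a partition
`0 = a_0 < ⋯ < a_r = 1` such that on each open interval `(a_{i-1}, a_i)` the map `T`
is strictly monotone and `C²` with `|T'| ≥ s` there. -/
def PiecewiseExpanding (T : ℝ → ℝ) (s : ℝ) : Prop :=
  ∃ (r : ℕ) (a : ℕ → ℝ), 0 < r ∧ a 0 = 0 ∧ a r = 1 ∧
    (∀ i < r, a i < a (i + 1)) ∧
    ∀ i < r,
      (StrictMonoOn T (Set.Ioo (a i) (a (i + 1))) ∨
        StrictAntiOn T (Set.Ioo (a i) (a (i + 1)))) ∧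
      ContDiffOn ℝ 2 T (Set.Ioo (a i) (a (i + 1))) ∧
      ∀ x ∈ Set.Ioo (a i) (a (i + 1)),
        s ≤ |derivWithin T (Set.Ioo (a i) (a (i + 1))) x|

/-- `g` is a version of the Frobenius–Perron image of `f` under `T`:
`∫_A g dm = ∫_{T⁻¹(A)} f dm` for every Borel set `A`. -/
def IsFPImage (T : ℝ → ℝ) (f g : ℝ → ℝ) : Prop :=
  ∀ A : Set ℝ, MeasurableSet A → ∫ x in A, g x ∂m = ∫ x in T ⁻¹' A, f x ∂m

/-!
For each `n`, the Cesàro averages `v_n = n⁻¹ ∑_{k<n} P_n^k 1` are probability densities whose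
variation stays below `B/(1-A)`, the fixed point of `V ↦ A V + B` in the Lasota–Yorke inequality.
Against a bounded continuous test function `ψ` they are `τ_n`-invariant up to `2‖ψ‖/n`, because the
averaged sum telescopes. Helly's selection theorem extracts a subsequence converging pointwise on
`[0,1]` to some `f*`; lower semicontinuity of the variation bounds `V(f*)`, and dominated
convergence, together with `τ_n → τ` pointwise, turns the approximate invariance into
`∫ f* · ψ ∘ τ dm = ∫ f* · ψ dm` for every bounded continuous `ψ`, which determines the measure.
-/

open Set
open scoped NNReal BoundedContinuousFunction

instance : IsProbabilityMeasure m := ⟨by simp [m]⟩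

section Variation

variable {α E : Type*} [LinearOrder α]

theorem eVariationOn_const [PseudoEMetricSpace E] (c : E) (s : Set α) :
    eVariationOn (fun _ => c) s = 0 :=
  eVariationOn.constant_on (subsingleton_singleton.anti (by rintro _ ⟨x, -, rfl⟩; rfl))

theorem eVariationOn_add_le [SeminormedAddCommGroup E] (f g : α → E) (s : Set α) :
    eVariationOn (f + g) s ≤ eVariationOn f s + eVariationOn g s := by
  refine iSup_le fun ⟨n, u, hu, us⟩ => ?_
  calc ∑ i ∈ Finset.range n, edist ((f + g) (u (i + 1))) ((f + g) (u i))
      ≤ ∑ i ∈ Finset.range n,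
          (edist (f (u (i + 1))) (f (u i)) + edist (g (u (i + 1))) (g (u i))) :=
        Finset.sum_le_sum fun i _ => edist_add_add_le _ _ _ _
    _ ≤ eVariationOn f s + eVariationOn g s := by
        rw [Finset.sum_add_distrib]
        exact add_le_add (eVariationOn.sum_le hu us) (eVariationOn.sum_le hu us)

theorem eVariationOn_finset_sum_le [SeminormedAddCommGroup E] {ι : Type*} (t : Finset ι)
    (f : ι → α → E) (s : Set α) :
    eVariationOn (∑ i ∈ t, f i) s ≤ ∑ i ∈ t, eVariationOn (f i) s :=
  Finset.le_sum_of_subadditive (M := α → E) (fun f => eVariationOn f s) (eVariationOn_const 0 s).le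
    (fun f g => eVariationOn_add_le f g s) t f

theorem eVariationOn_const_smul_le (c : ℝ) (f : α → ℝ) (s : Set α) :
    eVariationOn (c • f) s ≤ ‖c‖ₑ * eVariationOn f s := by
  have := eVariationOn_smul_le (f := fun _ => c) (g := f) (C := ‖c‖ₑ) (D := ⊤) (s := s)
    (fun _ _ => le_rfl) (fun _ _ => le_top)
  rwa [eVariationOn_const, mul_zero, add_zero] at this

theorem eVariationOn_le_of_tendsto [PseudoEMetricSpace E] {ι : Type*} {l : Filter ι} [l.NeBot]
    {F : ι → α → E} {f : α → E} {s : Set α} {c : ℝ≥0∞}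
    (hF : ∀ x ∈ s, Tendsto (fun i => F i x) l (𝓝 (f x))) (hc : ∀ i, eVariationOn (F i) s ≤ c) :
    eVariationOn f s ≤ c :=
  le_of_not_gt fun h =>
    let ⟨i, hi⟩ := (eVariationOn.lowerSemicontinuous_aux hF h).exists
    (hc i).not_gt hi

end Variation

theorem BoundedVariationOn.integrableOn {f : ℝ → ℝ} {s : Set ℝ} (hf : BoundedVariationOn f s)
    (hs : MeasurableSet s) {μ : Measure ℝ} (hμs : μ s ≠ ⊤) : IntegrableOn f s μ := by
  rcases s.eq_empty_or_nonempty with rfl | ⟨a, ha⟩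
  · exact integrableOn_empty
  have := isFiniteMeasure_restrict.2 hμs
  obtain ⟨p, q, hp, hq, hpq⟩ := hf.locallyBoundedVariationOn.exists_monotoneOn_sub_monotoneOn
  have hmeas : AEStronglyMeasurable f (μ.restrict s) := by
    rw [hpq]
    exact ((aemeasurable_restrict_of_monotoneOn hs hp).sub
      (aemeasurable_restrict_of_monotoneOn hs hq)).aestronglyMeasurable
  refine Integrable.of_bound hmeas (|f a| + (eVariationOn f s).toReal)
    ((ae_restrict_mem hs).mono fun x hx => ?_)
  have := hf.dist_le hx ha
  rw [Real.dist_eq] at this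
  rw [Real.norm_eq_abs]
  linarith [abs_sub_abs_le_abs_sub (f x) (f a)]

theorem BoundedVariationOn.abs_sub_integral_le {α : Type*} [LinearOrder α] [MeasurableSpace α]
    {μ : Measure α} [IsProbabilityMeasure μ] {f : α → ℝ} {s : Set α}
    (hf : BoundedVariationOn f s) (hfμ : Integrable f μ) (hs : μ sᶜ = 0) {x : α} (hx : x ∈ s) :
    |f x - ∫ y, f y ∂μ| ≤ (eVariationOn f s).toReal := by
  obtain ⟨y, hy, hfy⟩ := exists_notMem_null_le_integral hfμ hs
  obtain ⟨z, hz, hfz⟩ := exists_notMem_null_integral_le hfμ hs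
  rw [notMem_compl_iff] at hy hz
  rw [abs_sub_le_iff]
  exact ⟨by linarith [hf.sub_le hx hy], by linarith [hf.sub_le hz hx]⟩

theorem exists_strictMono_tendsto_of_countable {α : Type*} {f : ℕ → α → ℝ} {D : Set α}
    (hD : D.Countable) {K : ℝ} (hK : ∀ j, ∀ x ∈ D, |f j x| ≤ K) :
    ∃ φ : ℕ → ℕ, StrictMono φ ∧ ∀ x ∈ D, ∃ l, Tendsto (fun j => f (φ j) x) atTop (𝓝 l) := by
  have := hD.to_subtype
  obtain ⟨L, -, φ, hφ, hL⟩ := (isCompact_univ_pi fun _ : D => isCompact_Icc).tendsto_subseq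
    (x := fun j (x : D) => f j x) fun j => mem_univ_pi.2 fun x => abs_le.1 (hK j x x.2)
  exact ⟨φ, hφ, fun x hx => ⟨L ⟨x, hx⟩, tendsto_pi_nhds.1 hL ⟨x, hx⟩⟩⟩

theorem tendsto_of_monotone_of_tendsto_rat {f : ℕ → ℝ → ℝ} (hf : ∀ j, Monotone (f j))
    {L : ℚ → ℝ} (hL : ∀ q : ℚ, Tendsto (fun j => f j q) atTop (𝓝 (L q))) {x c : ℝ}
    (hlo : ∀ a < c, ∃ q : ℚ, (q : ℝ) < x ∧ a < L q) (hhi : ∀ b > c, ∃ q : ℚ, x < q ∧ L q < b) :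
    Tendsto (fun j => f j x) atTop (𝓝 c) := by
  refine tendsto_order.2 ⟨fun a ha => ?_, fun b hb => ?_⟩
  · obtain ⟨q, hqx, haq⟩ := hlo a ha
    filter_upwards [(hL q).eventually (lt_mem_nhds haq)] with j hj using hj.trans_le (hf j hqx.le)
  · obtain ⟨q, hxq, hqb⟩ := hhi b hb
    filter_upwards [(hL q).eventually (gt_mem_nhds hqb)] with j hj using (hf j hxq.le).trans_lt hj

/-- Helly's selection theorem for monotone functions. -/
theorem exists_strictMono_tendsto_of_monotone {f : ℕ → ℝ → ℝ} (hf : ∀ j, Monotone (f j)) {K : ℝ}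
    (hK : ∀ j x, |f j x| ≤ K) :
    ∃ φ : ℕ → ℕ, StrictMono φ ∧ ∀ x, ∃ l, Tendsto (fun j => f (φ j) x) atTop (𝓝 l) := by
  obtain ⟨φ₁, hφ₁, hrat⟩ := exists_strictMono_tendsto_of_countable (f := f)
    (countable_range ((↑) : ℚ → ℝ)) fun j x _ => hK j x
  choose L hL using fun q : ℚ => hrat q (mem_range_self q)
  have hLL : ∀ {x : ℝ} {q q' : ℚ}, (q : ℝ) < x → x < q' → L q ≤ L q' := fun {_ q q'} hq hq' =>
    le_of_tendsto_of_tendsto' (hL q) (hL q') fun j => hf (φ₁ j) (hq.trans hq').le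
  set G : ℝ → ℝ := fun x => sSup (L '' {q | (q : ℝ) < x})
  have hne : ∀ x, (L '' {q : ℚ | (q : ℝ) < x}).Nonempty := fun x =>
    let ⟨q, hq⟩ := exists_rat_lt x; ⟨_, q, hq, rfl⟩
  have hbdd : ∀ x, BddAbove (L '' {q : ℚ | (q : ℝ) < x}) := fun x =>
    let ⟨q', hq'⟩ := exists_rat_gt x; ⟨L q', by rintro _ ⟨q, hq, rfl⟩; exact hLL hq hq'⟩
  have hLG : ∀ {x : ℝ} {q : ℚ}, (q : ℝ) < x → L q ≤ G x := fun hq =>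
    le_csSup (hbdd _) ⟨_, hq, rfl⟩
  have hGL : ∀ {x : ℝ} {q : ℚ}, x < q → G x ≤ L q := fun hq =>
    csSup_le (hne _) (by rintro _ ⟨q', hq', rfl⟩; exact hLL hq' hq)
  have hG : Monotone G := fun x y hxy =>
    csSup_le (hne _) (by rintro _ ⟨q, hq, rfl⟩; exact hLG (hq.trans_le hxy))
  -- At continuity points of `G` the values are squeezed between limits at rationals; the
  -- countably many jumps of `G` need a second extraction.
  have hcont : ∀ x, ContinuousAt G x → Tendsto (fun j => f (φ₁ j) x) atTop (𝓝 (G x)) := by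
    intro x hx
    refine tendsto_of_monotone_of_tendsto_rat (fun j => hf (φ₁ j)) hL (fun a ha => ?_)
      (fun b hb => ?_)
    · obtain ⟨y, hay, hyx⟩ := (((hx.mono_left nhdsWithin_le_nhds).eventually
        (lt_mem_nhds ha)).and (self_mem_nhdsWithin (s := Iio x))).exists
      obtain ⟨q, hyq, hqx⟩ := exists_rat_btwn hyx
      exact ⟨q, hqx, hay.trans_le (hGL hyq)⟩
    · obtain ⟨y, hyb, hxy⟩ := (((hx.mono_left nhdsWithin_le_nhds).eventually
        (gt_mem_nhds hb)).and (self_mem_nhdsWithin (s := Ioi x))).exists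
      obtain ⟨q, hxq, hqy⟩ := exists_rat_btwn hxy
      exact ⟨q, hxq, (hLG hqy).trans_lt hyb⟩
  obtain ⟨φ₂, hφ₂, hjump⟩ := exists_strictMono_tendsto_of_countable (f := fun j => f (φ₁ j))
    hG.countable_not_continuousAt fun j x _ => hK _ x
  refine ⟨φ₁ ∘ φ₂, hφ₁.comp hφ₂, fun x => ?_⟩
  by_cases hx : ContinuousAt G x
  · exact ⟨G x, (hcont x hx).comp hφ₂.tendsto_atTop⟩
  · exact hjump x hx

/-- Helly's selection theorem. -/
theorem exists_strictMono_tendsto_of_eVariationOn_le {f : ℕ → ℝ → ℝ} {a b : ℝ} (hab : a ≤ b)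
    {K : ℝ} {C : ℝ≥0∞} (hC : C ≠ ⊤) (hK : ∀ j, ∀ x ∈ Icc a b, |f j x| ≤ K)
    (hV : ∀ j, eVariationOn (f j) (Icc a b) ≤ C) :
    ∃ φ : ℕ → ℕ, StrictMono φ ∧ ∃ g : ℝ → ℝ, ∀ x ∈ Icc a b,
      Tendsto (fun j => f (φ j) x) atTop (𝓝 (g x)) := by
  have hBV : ∀ j, LocallyBoundedVariationOn (f j) (Icc a b) := fun j =>
    BoundedVariationOn.locallyBoundedVariationOn (ne_top_of_le_ne_top hC (hV j))
  have ha : a ∈ Icc a b := left_mem_Icc.2 hab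
  -- Jordan decomposition `f j = p j - q j`, extended to `ℝ` by `projIcc` so that the monotone
  -- case applies to `p` and `q`
  set p : ℕ → ℝ → ℝ := fun j x => variationOnFromTo (f j) (Icc a b) a (projIcc a b hab x)
  set q : ℕ → ℝ → ℝ := fun j x => p j x - f j (projIcc a b hab x)
  have hp : ∀ j, Monotone (p j) := fun j x y hxy =>
    variationOnFromTo.monotoneOn (hBV j) ha (projIcc a b hab x).2 (projIcc a b hab y).2
      (monotone_projIcc hab hxy)
  have hq : ∀ j, Monotone (q j) := fun j x y hxy =>
    variationOnFromTo.sub_self_monotoneOn (hBV j) ha (projIcc a b hab x).2 (projIcc a b hab y).2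
      (monotone_projIcc hab hxy)
  have hpC : ∀ j x, |p j x| ≤ C.toReal := by
    intro j x
    have hax : a ≤ projIcc a b hab x := (projIcc a b hab x).2.1
    rw [abs_of_nonneg (variationOnFromTo.nonneg_of_le _ _ hax)]
    refine (variationOnFromTo.eq_of_le _ _ hax).trans_le ?_
    exact ENNReal.toReal_mono hC ((eVariationOn.mono _ inter_subset_left).trans (hV j))
  obtain ⟨φ₁, hφ₁, hpφ⟩ := exists_strictMono_tendsto_of_monotone hp hpC
  obtain ⟨φ₂, hφ₂, hqφ⟩ := exists_strictMono_tendsto_of_monotone (fun j => hq (φ₁ j))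
    (K := C.toReal + K) fun j x =>
      (abs_sub _ _).trans (add_le_add (hpC _ x) (hK _ _ (projIcc a b hab x).2))
  choose P hP using hpφ
  choose Q hQ using hqφ
  refine ⟨φ₁ ∘ φ₂, hφ₁.comp hφ₂, fun x => P x - Q x, fun x hx => ?_⟩
  refine (((hP x).comp hφ₂.tendsto_atTop).sub (hQ x)).congr fun j => ?_
  simp [q, projIcc_of_mem hab hx]

section WithDensity

variable {α : Type*} [MeasurableSpace α] {μ : Measure α} {g : α → ℝ}

theorem withDensity_ofReal_apply [SFinite μ] (hg : Integrable g μ) (hg0 : 0 ≤ᵐ[μ] g) (s : Set α) :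
    μ.withDensity (fun x => ENNReal.ofReal (g x)) s = ENNReal.ofReal (∫ x in s, g x ∂μ) := by
  rw [withDensity_apply', ofReal_integral_eq_lintegral_ofReal hg.integrableOn
    (ae_restrict_of_ae hg0)]

theorem integral_withDensity_ofReal (hg : AEMeasurable g μ) (hg0 : 0 ≤ᵐ[μ] g) (ψ : α → ℝ) :
    ∫ x, ψ x ∂μ.withDensity (fun x => ENNReal.ofReal (g x)) = ∫ x, g x * ψ x ∂μ := by
  rw [integral_withDensity_eq_integral_toReal_smul₀ hg.ennreal_ofReal
    (ae_of_all _ fun _ => ENNReal.ofReal_lt_top)]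
  refine integral_congr_ae (hg0.mono fun x hx => ?_)
  simp [ENNReal.toReal_ofReal hx]

theorem map_withDensity_ofReal_eq_self {Ω : Type*} [MeasurableSpace Ω] [TopologicalSpace Ω]
    [HasOuterApproxClosed Ω] [BorelSpace Ω] {μ : Measure Ω} [IsFiniteMeasure μ] {T : Ω → Ω}
    {f : Ω → ℝ} (hT : AEMeasurable T μ) (hf : Integrable f μ) (hf0 : 0 ≤ᵐ[μ] f)
    (hinv : ∀ ψ : Ω →ᵇ ℝ, ∫ x, f x * ψ (T x) ∂μ = ∫ x, f x * ψ x ∂μ) :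
    (μ.withDensity fun x => ENNReal.ofReal (f x)).map T =
      μ.withDensity fun x => ENNReal.ofReal (f x) := by
  have := isFiniteMeasure_withDensity_ofReal hf.hasFiniteIntegral
  refine ext_of_forall_integral_eq_of_IsFiniteMeasure fun ψ => ?_
  rw [integral_map (hT.mono_ac (withDensity_absolutelyContinuous _ _))
      ψ.continuous.aestronglyMeasurable,
    integral_withDensity_ofReal hf.aemeasurable hf0,
    integral_withDensity_ofReal hf.aemeasurable hf0, hinv ψ]

end WithDensity

section FrobeniusPerron

variable {T g h : ℝ → ℝ}

theorem map_withDensity_of_isFPImage (hT : AEMeasurable T m) (hg : Integrable g m)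
    (hg0 : 0 ≤ᵐ[m] g) (hh : Integrable h m) (hh0 : 0 ≤ᵐ[m] h) (hgh : IsFPImage T g h) :
    (m.withDensity fun x => ENNReal.ofReal (g x)).map T =
      m.withDensity fun x => ENNReal.ofReal (h x) := by
  ext A hA
  rw [Measure.map_apply_of_aemeasurable (hT.mono_ac (withDensity_absolutelyContinuous _ _)) hA,
    withDensity_ofReal_apply hg hg0, withDensity_ofReal_apply hh hh0, hgh A hA]

theorem integral_mul_comp_of_isFPImage (hT : AEMeasurable T m) (hg : Integrable g m)
    (hg0 : 0 ≤ᵐ[m] g) (hh : Integrable h m) (hh0 : 0 ≤ᵐ[m] h) (hgh : IsFPImage T g h)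
    (ψ : ℝ →ᵇ ℝ) : ∫ x, g x * ψ (T x) ∂m = ∫ x, h x * ψ x ∂m := by
  rw [← integral_withDensity_ofReal hg.aemeasurable hg0, ← integral_withDensity_ofReal
    hh.aemeasurable hh0, ← map_withDensity_of_isFPImage hT hg hg0 hh hh0 hgh,
    integral_map (hT.mono_ac (withDensity_absolutelyContinuous _ _))
      ψ.continuous.aestronglyMeasurable]

end FrobeniusPerron

theorem Icc_subset_biUnion_Ioo_union_image {α : Type*} [LinearOrder α] (a : ℕ → α) (k : ℕ) :
    Icc (a 0) (a k) ⊆ (⋃ i < k, Ioo (a i) (a (i + 1))) ∪ a '' Iic k := by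
  induction k with
  | zero => exact fun x hx => Or.inr ⟨0, mem_Iic.2 le_rfl, le_antisymm hx.1 hx.2⟩
  | succ k ih =>
    intro x hx
    rcases le_or_gt x (a k) with hxk | hxk
    · refine union_subset_union (biUnion_mono (fun i hi => ?_) fun _ _ => subset_rfl)
        (image_mono (Iic_subset_Iic.2 k.le_succ)) (ih ⟨hx.1, hxk⟩)
      exact Nat.lt_succ_of_lt hi
    · rcases hx.2.eq_or_lt with rfl | hxk'
      · exact Or.inr ⟨k + 1, mem_Iic.2 le_rfl, rfl⟩
      · exact Or.inl (mem_biUnion (Nat.lt_succ_self k) ⟨hxk, hxk'⟩)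

theorem aemeasurable_restrict_Icc_of_continuousOn_Ioo {μ : Measure ℝ} [NullSingletonClass μ]
    {T : ℝ → ℝ} (a : ℕ → ℝ) (r : ℕ) (hT : ∀ i < r, ContinuousOn T (Ioo (a i) (a (i + 1)))) :
    AEMeasurable T (μ.restrict (Icc (a 0) (a r))) := by
  refine (aemeasurable_union_iff.2 ⟨?_, ?_⟩).mono_measure
    (Measure.restrict_mono (Icc_subset_biUnion_Ioo_union_image a r) le_rfl)
  · refine aemeasurable_iUnion_iff.2 fun i => ?_
    by_cases hi : i < r
    · simpa [hi] using (hT i hi).aemeasurable measurableSet_Ioo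
    · simp [hi]
  · rw [Measure.restrict_eq_zero.2 (((finite_Iic r).image a).measure_zero μ)]
    exact aemeasurable_zero_measure

theorem PiecewiseExpanding.aemeasurable {T : ℝ → ℝ} {s : ℝ} (hT : PiecewiseExpanding T s) :
    AEMeasurable T m := by
  obtain ⟨r, a, -, ha0, har, -, hpieces⟩ := hT
  have := aemeasurable_restrict_Icc_of_continuousOn_Ioo (μ := volume) a r fun i hi =>
    (hpieces i hi).2.1.continuousOn
  rwa [ha0, har] at this

theorem tendsto_integral_mul_of_tendsto {α : Type*} [MeasurableSpace α] {μ : Measure α}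
    [IsFiniteMeasure μ] {F G : ℕ → α → ℝ} {f g : α → ℝ} {a b : ℝ}
    (hF : ∀ j, AEStronglyMeasurable (F j) μ) (hG : ∀ j, AEStronglyMeasurable (G j) μ)
    (hFa : ∀ j, ∀ᵐ x ∂μ, |F j x| ≤ a) (hGb : ∀ j, ∀ᵐ x ∂μ, |G j x| ≤ b)
    (hFf : ∀ᵐ x ∂μ, Tendsto (fun j => F j x) atTop (𝓝 (f x)))
    (hGg : ∀ᵐ x ∂μ, Tendsto (fun j => G j x) atTop (𝓝 (g x))) :
    Tendsto (fun j => ∫ x, F j x * G j x ∂μ) atTop (𝓝 (∫ x, f x * g x ∂μ)) := by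
  refine tendsto_integral_of_dominated_convergence (fun _ => a * b) (fun j => (hF j).mul (hG j))
    (integrable_const _) (fun j => ?_) (by filter_upwards [hFf, hGg] with x h₁ h₂ using h₁.mul h₂)
  filter_upwards [hFa j, hGb j] with x h₁ h₂
  rw [Real.norm_eq_abs, abs_mul]
  exact mul_le_mul h₁ h₂ (abs_nonneg _) ((abs_nonneg _).trans h₁)

structure IsBVDensity (c : ℝ≥0∞) (g : ℝ → ℝ) : Prop where
  integrable : Integrable g m
  nonneg : 0 ≤ᵐ[m] g
  integral_eq_one : ∫ x, g x ∂m = 1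
  eVariationOn_le : eVariationOn g (Icc 0 1) ≤ c

theorem integrable_m_of_boundedVariationOn {g : ℝ → ℝ} (hg : BoundedVariationOn g (Icc 0 1)) :
    Integrable g m :=
  hg.integrableOn measurableSet_Icc (by simp)

theorem ae_m_mem_Icc : ∀ᵐ x ∂m, x ∈ Icc (0 : ℝ) 1 :=
  ae_restrict_mem measurableSet_Icc

namespace IsBVDensity

variable {c : ℝ≥0∞} {g : ℝ → ℝ}

theorem one : IsBVDensity c fun _ => 1 :=
  ⟨integrable_const _, ae_of_all _ fun _ => zero_le_one, by simp, by simp [eVariationOn_const]⟩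

theorem abs_sub_one_le (hg : IsBVDensity c g) (hc : c ≠ ⊤) {x : ℝ} (hx : x ∈ Icc (0 : ℝ) 1) :
    |g x - 1| ≤ c.toReal := by
  have hBV : BoundedVariationOn g (Icc 0 1) := ne_top_of_le_ne_top hc hg.eVariationOn_le
  have := hBV.abs_sub_integral_le hg.integrable (ae_iff.1 ae_m_mem_Icc) hx
  rw [hg.integral_eq_one] at this
  exact this.trans (ENNReal.toReal_mono hc hg.eVariationOn_le)

theorem abs_le (hg : IsBVDensity c g) (hc : c ≠ ⊤) {x : ℝ} (hx : x ∈ Icc (0 : ℝ) 1) :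
    |g x| ≤ 1 + c.toReal := by
  linarith [abs_sub_abs_le_abs_sub (g x) 1, hg.abs_sub_one_le hc hx, abs_one (α := ℝ)]

theorem abs_integral_mul_le (hg : IsBVDensity c g) {ψ : ℝ → ℝ} {K : ℝ}
    (hψ : ∀ x, |ψ x| ≤ K) : |∫ x, g x * ψ x ∂m| ≤ K := by
  calc |∫ x, g x * ψ x ∂m| ≤ ∫ x, g x * K ∂m :=
        norm_integral_le_of_norm_le (f := fun x => g x * ψ x) (hg.integrable.mul_const K)
          (hg.nonneg.mono fun x hx => by
            rw [Real.norm_eq_abs, abs_mul, abs_of_nonneg hx]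
            exact mul_le_mul_of_nonneg_left (hψ x) hx)
    _ = K := by rw [integral_mul_const, hg.integral_eq_one, one_mul]

theorem of_isFPImage {T h : ℝ → ℝ} (hc : c ≠ ⊤) (hg : IsBVDensity c g) (hgh : IsFPImage T g h)
    (hV : eVariationOn h (Icc 0 1) ≤ c) : IsBVDensity c h := by
  have hh : Integrable h m := integrable_m_of_boundedVariationOn (ne_top_of_le_ne_top hc hV)
  refine ⟨hh, ae_nonneg_of_forall_setIntegral_nonneg hh fun A hA _ => ?_, ?_, hV⟩
  · rw [hgh A hA]
    exact integral_nonneg_of_ae (ae_restrict_of_ae hg.nonneg)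
  · have := hgh univ MeasurableSet.univ
    rwa [preimage_univ, setIntegral_univ, setIntegral_univ, hg.integral_eq_one] at this

theorem average {g : ℕ → ℝ → ℝ} {n : ℕ} (hn : 0 < n) (hg : ∀ k, IsBVDensity c (g k)) :
    IsBVDensity c ((n : ℝ)⁻¹ • ∑ k ∈ Finset.range n, g k) := by
  have hint : Integrable (∑ k ∈ Finset.range n, g k) m :=
    integrable_finsetSum' _ fun k _ => (hg k).integrable
  refine ⟨hint.smul _, ?_, ?_, ?_⟩
  · filter_upwards [ae_all_iff.2 fun k => (hg k).nonneg] with x hx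
    simp only [Pi.smul_apply, Finset.sum_apply, smul_eq_mul, Pi.zero_apply]
    exact mul_nonneg (by positivity) (Finset.sum_nonneg fun k _ => hx k)
  · simp only [Pi.smul_apply, smul_eq_mul, Finset.sum_apply]
    rw [integral_const_mul, integral_finsetSum _ fun k _ => (hg k).integrable]
    simp [(hg _).integral_eq_one, hn.ne']
  · calc eVariationOn ((n : ℝ)⁻¹ • ∑ k ∈ Finset.range n, g k) (Icc 0 1)
        ≤ ‖(n : ℝ)⁻¹‖ₑ * ∑ k ∈ Finset.range n, eVariationOn (g k) (Icc 0 1) :=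
          (eVariationOn_const_smul_le _ _ _).trans
            (mul_le_mul_right (eVariationOn_finset_sum_le _ _ _) _)
      _ ≤ (n : ℝ≥0∞)⁻¹ * (n * c) := by
          rw [enorm_inv (by positivity), Real.enorm_natCast]
          gcongr
          simpa using Finset.sum_le_sum (s := Finset.range n) fun k _ => (hg k).eVariationOn_le
      _ = c := ENNReal.inv_mul_cancel_left (Nat.cast_ne_zero.2 hn.ne') (ENNReal.natCast_ne_top n)

theorem ae_abs_le (hg : IsBVDensity c g) (hc : c ≠ ⊤) : ∀ᵐ x ∂m, |g x| ≤ 1 + c.toReal :=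
  ae_m_mem_Icc.mono fun _ hx => hg.abs_le hc hx

theorem isProbabilityMeasure_withDensity (hg : IsBVDensity c g) :
    IsProbabilityMeasure (m.withDensity fun x => ENNReal.ofReal (g x)) :=
  ⟨by rw [withDensity_ofReal_apply hg.integrable hg.nonneg, setIntegral_univ, hg.integral_eq_one,
    ENNReal.ofReal_one]⟩

theorem of_tendsto {g : ℕ → ℝ → ℝ} {f : ℝ → ℝ} (hc : c ≠ ⊤) (hg : ∀ j, IsBVDensity c (g j))
    (hgf : ∀ x ∈ Icc (0 : ℝ) 1, Tendsto (fun j => g j x) atTop (𝓝 (f x))) : IsBVDensity c f := by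
  have hV : eVariationOn f (Icc 0 1) ≤ c :=
    eVariationOn_le_of_tendsto hgf fun j => (hg j).eVariationOn_le
  have hgf' : ∀ᵐ x ∂m, Tendsto (fun j => g j x) atTop (𝓝 (f x)) := ae_m_mem_Icc.mono hgf
  refine ⟨integrable_m_of_boundedVariationOn (ne_top_of_le_ne_top hc hV), ?_, ?_, hV⟩
  · filter_upwards [ae_all_iff.2 fun j => (hg j).nonneg, hgf'] with x h₁ h₂
    exact ge_of_tendsto' h₂ h₁
  · have := tendsto_integral_mul_of_tendsto (G := fun _ _ => 1) (g := fun _ => 1)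
      (fun j => (hg j).integrable.aestronglyMeasurable) (fun _ => aestronglyMeasurable_const)
      (fun j => (hg j).ae_abs_le hc) (fun _ => ae_of_all _ fun _ => abs_one.le) hgf'
      (ae_of_all _ fun _ => tendsto_const_nhds)
    simp only [mul_one, fun j => (hg j).integral_eq_one] at this
    exact (tendsto_nhds_unique tendsto_const_nhds this).symm

end IsBVDensity

section LasotaYorke

theorem ofReal_mul_ofReal_div_one_sub_add_ofReal_le {A B : ℝ} (hA0 : 0 ≤ A) (hA1 : A < 1) :
    ENNReal.ofReal A * ENNReal.ofReal (B / (1 - A)) + ENNReal.ofReal B ≤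
      ENNReal.ofReal (B / (1 - A)) := by
  rcases le_or_gt B 0 with hB | hB
  · rw [ENNReal.ofReal_of_nonpos hB, ENNReal.ofReal_of_nonpos (div_nonpos_of_nonpos_of_nonneg hB
      (by linarith))]
    simp
  · have hA : 0 < 1 - A := by linarith
    rw [← ENNReal.ofReal_mul hA0, ← ENNReal.ofReal_add (by positivity) hB.le]
    refine ENNReal.ofReal_le_ofReal (le_of_eq ?_)
    field_simp
    ring

variable {T : ℝ → ℝ} {Q : (ℝ → ℝ) → ℝ → ℝ} {A B : ℝ}

theorem isBVDensity_iterate (hQ : ∀ g, Integrable g m → IsFPImage T g (Q g))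
    (hA0 : 0 ≤ A) (hA1 : A < 1)
    (hLY : ∀ g : ℝ → ℝ, BoundedVariationOn g (Icc 0 1) →
      eVariationOn (Q g) (Icc 0 1) ≤
        ENNReal.ofReal A * eVariationOn g (Icc 0 1) + ENNReal.ofReal (B * ∫ x, |g x| ∂m))
    (k : ℕ) : IsBVDensity (ENNReal.ofReal (B / (1 - A))) (Q^[k] fun _ => 1) := by
  induction k with
  | zero => exact IsBVDensity.one
  | succ k ih =>
    rw [Function.iterate_succ_apply']
    refine ih.of_isFPImage ENNReal.ofReal_ne_top (hQ _ ih.integrable) ?_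
    have habs : ∫ x, |(Q^[k] fun _ => 1) x| ∂m = 1 :=
      (integral_congr_ae (ih.nonneg.mono fun x hx => abs_of_nonneg hx)).trans ih.integral_eq_one
    calc _ ≤ _ := hLY _ (ne_top_of_le_ne_top ENNReal.ofReal_ne_top ih.eVariationOn_le)
      _ ≤ ENNReal.ofReal A * ENNReal.ofReal (B / (1 - A)) + ENNReal.ofReal B := by
          rw [habs, mul_one]
          gcongr
          exact ih.eVariationOn_le
      _ ≤ _ := ofReal_mul_ofReal_div_one_sub_add_ofReal_le hA0 hA1

/-- The witness is the Cesàro average `n⁻¹ ∑_{k<n} Q^[k] 1`: tested against `ψ`, its integrals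
telescope since `∫ Q^[k] 1 · ψ ∘ T dm = ∫ Q^[k+1] 1 · ψ dm`. -/
theorem exists_isBVDensity_abs_integral_comp_sub_le (hT : AEMeasurable T m)
    (hQ : ∀ g, Integrable g m → IsFPImage T g (Q g)) (hA0 : 0 ≤ A) (hA1 : A < 1)
    (hLY : ∀ g : ℝ → ℝ, BoundedVariationOn g (Icc 0 1) →
      eVariationOn (Q g) (Icc 0 1) ≤
        ENNReal.ofReal A * eVariationOn g (Icc 0 1) + ENNReal.ofReal (B * ∫ x, |g x| ∂m))
    {n : ℕ} (hn : 0 < n) :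
    ∃ v, IsBVDensity (ENNReal.ofReal (B / (1 - A))) v ∧ ∀ ψ : ℝ →ᵇ ℝ,
      |∫ x, v x * ψ (T x) ∂m - ∫ x, v x * ψ x ∂m| ≤ 2 * ‖ψ‖ / n := by
  set W : ℕ → ℝ → ℝ := fun k => Q^[k] fun _ => 1
  have hW : ∀ k, IsBVDensity _ (W k) := isBVDensity_iterate hQ hA0 hA1 hLY
  refine ⟨_, IsBVDensity.average hn hW, fun ψ => ?_⟩
  have hψ : ∀ x, |ψ x| ≤ ‖ψ‖ := ψ.norm_coe_le_norm
  have hlin : ∀ ψ' : ℝ → ℝ, AEStronglyMeasurable ψ' m → (∀ x, |ψ' x| ≤ ‖ψ‖) →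
      ∫ x, ((n : ℝ)⁻¹ • ∑ k ∈ Finset.range n, W k) x * ψ' x ∂m =
        (n : ℝ)⁻¹ * ∑ k ∈ Finset.range n, ∫ x, W k x * ψ' x ∂m := by
    intro ψ' hψ' hψ'K
    simp only [Pi.smul_apply, Finset.sum_apply, smul_eq_mul, mul_assoc, Finset.sum_mul]
    rw [integral_const_mul, integral_finsetSum _ fun k _ =>
      (hW k).integrable.mul_bdd hψ' (ae_of_all _ hψ'K)]
  set a : ℕ → ℝ := fun k => ∫ x, W k x * ψ x ∂m
  have hshift : ∀ k, ∫ x, W k x * ψ (T x) ∂m = a (k + 1) := fun k =>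
    integral_mul_comp_of_isFPImage hT (hW k).integrable (hW k).nonneg (hW (k + 1)).integrable
      (hW (k + 1)).nonneg
      (by simpa [W, Function.iterate_succ_apply'] using hQ _ (hW k).integrable) ψ
  rw [hlin _ (ψ.continuous.comp_aestronglyMeasurable hT.aestronglyMeasurable) fun x => hψ _,
    hlin _ ψ.continuous.aestronglyMeasurable hψ, Finset.sum_congr rfl fun k _ => hshift k,
    ← mul_sub, ← Finset.sum_sub_distrib, Finset.sum_range_sub, abs_mul, abs_inv, Nat.abs_cast,
    div_eq_inv_mul]
  have ha : ∀ k, |a k| ≤ ‖ψ‖ := fun k => (hW k).abs_integral_mul_le hψ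
  gcongr
  linarith [abs_sub (a n) (a 0), ha n, ha 0]

end LasotaYorke

theorem integral_mul_comp_eq_of_tendsto {c : ℝ≥0∞} (hc : c ≠ ⊤) {T : ℕ → ℝ → ℝ} {τ : ℝ → ℝ}
    {v : ℕ → ℝ → ℝ} {f : ℝ → ℝ} (hT : ∀ j, AEMeasurable (T j) m)
    (hTτ : ∀ x ∈ Icc (0 : ℝ) 1, Tendsto (fun j => T j x) atTop (𝓝 (τ x)))
    (hv : ∀ j, IsBVDensity c (v j))
    (hvf : ∀ x ∈ Icc (0 : ℝ) 1, Tendsto (fun j => v j x) atTop (𝓝 (f x))) (ψ : ℝ →ᵇ ℝ)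
    {ε : ℕ → ℝ} (hε : Tendsto ε atTop (𝓝 0))
    (hvT : ∀ j, |∫ x, v j x * ψ (T j x) ∂m - ∫ x, v j x * ψ x ∂m| ≤ ε j) :
    ∫ x, f x * ψ (τ x) ∂m = ∫ x, f x * ψ x ∂m := by
  have h₁ := tendsto_integral_mul_of_tendsto (fun j => (hv j).integrable.aestronglyMeasurable)
    (fun j => ψ.continuous.comp_aestronglyMeasurable (hT j).aestronglyMeasurable)
    (fun j => (hv j).ae_abs_le hc) (fun j => ae_of_all _ fun x => ψ.norm_coe_le_norm (T j x))
    (ae_m_mem_Icc.mono hvf) (ae_m_mem_Icc.mono fun x hx => (ψ.continuous.tendsto _).comp (hTτ x hx))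
  have h₂ := tendsto_integral_mul_of_tendsto (G := fun _ => ψ)
    (fun j => (hv j).integrable.aestronglyMeasurable) (fun _ => ψ.continuous.aestronglyMeasurable)
    (fun j => (hv j).ae_abs_le hc) (fun _ => ae_of_all _ ψ.norm_coe_le_norm)
    (ae_m_mem_Icc.mono hvf) (ae_of_all _ fun _ => tendsto_const_nhds)
  exact sub_eq_zero.1 (tendsto_nhds_unique (h₁.sub h₂) (squeeze_zero_norm hvT hε))

theorem limit_map_admits_acim_general
    (s : ℝ)
    (τseq : ℕ → ℝ → ℝ) (τ : ℝ → ℝ)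
    (hpe : ∀ n, 1 ≤ n → PiecewiseExpanding (τseq n) s)
    (hconv : TendstoUniformlyOn τseq τ atTop (Set.Icc 0 1))
    (P : ℕ → (ℝ → ℝ) → (ℝ → ℝ))
    (hP : ∀ n, 1 ≤ n → ∀ g : ℝ → ℝ, Integrable g m → IsFPImage (τseq n) g (P n g))
    (A B : ℝ) (hA0 : 0 ≤ A) (hA1 : A < 1)
    (hLY : ∀ n, 1 ≤ n → ∀ g : ℝ → ℝ, BoundedVariationOn g (Set.Icc 0 1) →
      eVariationOn (P n g) (Set.Icc 0 1) ≤
        ENNReal.ofReal A * eVariationOn g (Set.Icc 0 1)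
          + ENNReal.ofReal (B * ∫ x, |g x| ∂m)) :
    ∃ μ : Measure ℝ, IsProbabilityMeasure μ ∧
      (∀ E : Set ℝ, MeasurableSet E → μ (τ ⁻¹' E) = μ E) ∧
      μ ≪ m ∧
      ∃ fstar : ℝ → ℝ,
        μ = m.withDensity (fun x => ENNReal.ofReal (fstar x)) ∧
        BoundedVariationOn fstar (Set.Icc 0 1) ∧
        eVariationOn fstar (Set.Icc 0 1) ≤ ENNReal.ofReal (B / (1 - A)) := by
  set C := ENNReal.ofReal (B / (1 - A))
  have hC : C ≠ ⊤ := ENNReal.ofReal_ne_top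
  have hτseq : ∀ j, AEMeasurable (τseq (j + 1)) m := fun j => (hpe _ j.succ_pos).aemeasurable
  choose v hv hvτ using fun j => exists_isBVDensity_abs_integral_comp_sub_le (hτseq j)
    (hP _ j.succ_pos) hA0 hA1 (hLY _ j.succ_pos) j.succ_pos
  obtain ⟨φ, hφ, f, hvf⟩ := exists_strictMono_tendsto_of_eVariationOn_le zero_le_one hC
    (fun j x hx => (hv j).abs_le hC hx) fun j => (hv j).eVariationOn_le
  have hf : IsBVDensity C f := .of_tendsto hC (fun j => hv (φ j)) hvf
  have hφ' : Tendsto (fun j => φ j + 1) atTop atTop :=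
    (tendsto_add_atTop_nat 1).comp hφ.tendsto_atTop
  have hτ_lim : ∀ x ∈ Icc (0 : ℝ) 1, Tendsto (fun j => τseq (φ j + 1) x) atTop (𝓝 (τ x)) :=
    fun x hx => (hconv.tendsto_at hx).comp hφ'
  have hτ : AEMeasurable τ m :=
    aemeasurable_of_tendsto_metrizable_ae' (fun j => hτseq (φ j)) (ae_m_mem_Icc.mono hτ_lim)
  have hinv : ∀ ψ : ℝ →ᵇ ℝ, ∫ x, f x * ψ (τ x) ∂m = ∫ x, f x * ψ x ∂m := fun ψ =>
    integral_mul_comp_eq_of_tendsto hC (fun j => hτseq (φ j)) hτ_lim (fun j => hv (φ j)) hvf ψ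
      ((tendsto_const_div_atTop_nhds_zero_nat (2 * ‖ψ‖)).comp hφ') fun j => hvτ (φ j) ψ
  refine ⟨_, hf.isProbabilityMeasure_withDensity, fun E hE => ?_,
    withDensity_absolutelyContinuous _ _, f, rfl, ne_top_of_le_ne_top hC hf.eVariationOn_le,
    hf.eVariationOn_le⟩
  rw [← Measure.map_apply_of_aemeasurable (hτ.mono_ac (withDensity_absolutelyContinuous _ _)) hE,
    map_withDensity_ofReal_eq_self hτ hf.integrable hf.nonneg hinv]

/-- If piecewise expanding maps `τ_n` converge uniformly to `τ` on `[0,1]` and their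
Frobenius–Perron operators satisfy a common Lasota–Yorke inequality with constants
`0 ≤ A < 1` and `B`, then `τ` admits an absolutely continuous invariant probability
measure whose density is of bounded variation with `V(f*) ≤ B/(1−A)`. -/
theorem limit_map_admits_acim
    (s : ℝ) (hs : 1 < s)
    (τseq : ℕ → ℝ → ℝ) (τ : ℝ → ℝ)
    (hpe : ∀ n, 1 ≤ n → PiecewiseExpanding (τseq n) s)
    (hconv : TendstoUniformlyOn τseq τ atTop (Set.Icc 0 1))
    (P : ℕ → (ℝ → ℝ) → (ℝ → ℝ))
    (hP : ∀ n, 1 ≤ n → ∀ g : ℝ → ℝ, Integrable g m → IsFPImage (τseq n) g (P n g))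
    (A B : ℝ) (hA0 : 0 ≤ A) (hA1 : A < 1)
    (hLY : ∀ n, 1 ≤ n → ∀ g : ℝ → ℝ, BoundedVariationOn g (Set.Icc 0 1) →
      eVariationOn (P n g) (Set.Icc 0 1) ≤
        ENNReal.ofReal A * eVariationOn g (Set.Icc 0 1)
          + ENNReal.ofReal (B * ∫ x, |g x| ∂m)) :
    ∃ μ : Measure ℝ, IsProbabilityMeasure μ ∧
      (∀ E : Set ℝ, MeasurableSet E → μ (τ ⁻¹' E) = μ E) ∧
      μ ≪ m ∧
      ∃ fstar : ℝ → ℝ,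
        μ = m.withDensity (fun x => ENNReal.ofReal (fstar x)) ∧
        BoundedVariationOn fstar (Set.Icc 0 1) ∧
        eVariationOn fstar (Set.Icc 0 1) ≤ ENNReal.ofReal (B / (1 - A)) :=
  limit_map_admits_acim_general s τseq τ hpe hconv P hP A B hA0 hA1 hLY
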